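/- Let U ⊆ ℝ^4 be open (ℝ^4 with the Minkowski form η, n = 2), (ξ, N) a null frame on U, and Z : U → ℝ^4 differentiable and parallel (fderiv ℝ Z p = 0 for all p). Assume: (i) at every p, A*_ξ(p) and A_N(p) are symmetric on screen vectors; (ii) (constant angle) for every p and every screen vector v at p, the derivative of q ↦ η(Z q, ξ q) * η(Z q, N q) at p in the direction v vanishes; (iii) Z*(p) ≠ 0 for all p, so that (since η is positive definite on screen vectors) η(Z* p, Z* p) > 0 and T := Z*/√(η(Z*, Z*)) is a well-defined differentiable unit screen field; (iv) W : U → ℝ^4 is differentiable with, at every p, η(W p, ξ p) = 0, η(W p, N p) = 0, η(W p, W p) = 1 and η(W p, Z* p) = 0; (v) (trace-free) η(A_{Z⊥}(p)(T p), T p) + η(A_{Z⊥}(p)(W p), W p) = 0 for all p. Then at every p ∈ U: P_p(D_{T p} T(p)) = 0, P_p(D_{T p} W(p)) = 0, P_p(D_{W p} T(p)) = 0 and P_p(D_{W p} W(p)) = 0; i.e., the screen covariant derivatives of the orthonormal screen frame {T, W} all vanish, so the screen distribution is flat. (Flat-Minkowski-ambient form of the paper's theorem that a screen integrable constant angle null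 hypersurface with respect to a parallel field and with tr A_{Z⊥} ≡ 0 has flat screen distribution.) -/

import Mathlib

/-! Since `Z` is parallel, `η(Z, Z)` is constant, and `η(Z, Z) = 2 η(Z, ξ) η(Z, N) + η(Z*, Z*)`
for the null frame; the constant angle condition therefore makes `η(Z*, Z*)` constant along the
screen. As `DZ = 0`, the screen part of `D_v Z*` is `A_{Z⊥} v`, so `A_{Z⊥} v ⊥ Z*` for every screen
vector `v`. Hence `η(A_{Z⊥} T, T) = 0`, the trace-free condition gives `η(A_{Z⊥} W, W) = 0`, and
symmetry gives `η(A_{Z⊥} T, W) = η(A_{Z⊥} W, T) = 0`. The screen of `ℝ⁴₁` is a spacelike plane, so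
the screen connection of the orthonormal frame `{T, W}` is the single form
`v ↦ η(D_v T, W) = |Z*|⁻¹ η(A_{Z⊥} v, W)`, which thus vanishes on `T` and on `W`. -/

open scoped BigOperators

noncomputable section

/-- Euclidean space `ℝ^m`. -/
abbrev E (m : ℕ) : Type := EuclideanSpace ℝ (Fin m)

/-- The Minkowski bilinear form `η(x,y) = -(x 0)(y 0) + ∑_{i≥1} (x i)(y i)` on `ℝ^(n+2)`. -/
def eta {n : ℕ} (x y : E (n + 2)) : ℝ :=
  (∑ i, x i * y i) - 2 * (x 0 * y 0)

/-- Screen projection `P_p(w) = w - η(w,N)ξ - η(w,ξ)N` determined by the null frame at a point. -/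
def sproj {n : ℕ} (xi N w : E (n + 2)) : E (n + 2) :=
  w - eta w N • xi - eta w xi • N

/-- Screen shape operator `A*_ξ(p)(v) = -P_p(D_v ξ (p))`. -/
def Astar {n : ℕ} (xi N : E (n + 2) → E (n + 2)) (p v : E (n + 2)) : E (n + 2) :=
  -sproj (xi p) (N p) (fderiv ℝ xi p v)

/-- Shape operator `A_N(p)(v) = -P_p(D_v N (p))`. -/
def AN {n : ℕ} (xi N : E (n + 2) → E (n + 2)) (p v : E (n + 2)) : E (n + 2) :=
  -sproj (xi p) (N p) (fderiv ℝ N p v)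

/-- Transversal one-form `τ_p(v) = η(D_v N(p), ξ p)`. -/
def tau {n : ℕ} (xi N : E (n + 2) → E (n + 2)) (p v : E (n + 2)) : ℝ :=
  eta (fderiv ℝ N p v) (xi p)

/-- Screen part `Z*(p) = P_p(Z p)` of a vector field. -/
def Zstar {n : ℕ} (xi N Z : E (n + 2) → E (n + 2)) (p : E (n + 2)) : E (n + 2) :=
  sproj (xi p) (N p) (Z p)

/-- `A_{Z⊥}(p)(v) = η(Z p, N p) • A*_ξ(p)(v) + η(Z p, ξ p) • A_N(p)(v)`. -/
def AZperp {n : ℕ} (xi N Z : E (n + 2) → E (n + 2)) (p v : E (n + 2)) : E (n + 2) :=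
  eta (Z p) (N p) • Astar xi N p v + eta (Z p) (xi p) • AN xi N p v

open Filter Topology

section Algebra

variable {n : ℕ}

lemma eta_comm (x y : E (n + 2)) : eta x y = eta y x := by
  simp only [eta, mul_comm]

lemma eta_add_left (x y z : E (n + 2)) : eta (x + y) z = eta x z + eta y z := by
  simp only [eta, PiLp.add_apply, add_mul, Finset.sum_add_distrib]; ring

lemma eta_smul_left (c : ℝ) (x z : E (n + 2)) : eta (c • x) z = c * eta x z := by
  simp only [eta, PiLp.smul_apply, smul_eq_mul, mul_assoc, ← Finset.mul_sum]; ring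

lemma eta_sub_left (x y z : E (n + 2)) : eta (x - y) z = eta x z - eta y z := by
  simp only [eta, PiLp.sub_apply, sub_mul, Finset.sum_sub_distrib]; ring

lemma eta_neg_left (x z : E (n + 2)) : eta (-x) z = -eta x z := by
  rw [← neg_one_smul ℝ x, eta_smul_left, neg_one_mul]

lemma eta_zero_left (z : E (n + 2)) : eta 0 z = 0 := by
  simpa using eta_smul_left 0 0 z

lemma eta_add_right (x y z : E (n + 2)) : eta x (y + z) = eta x y + eta x z := by
  rw [eta_comm, eta_add_left, eta_comm y, eta_comm z]

lemma eta_smul_right (c : ℝ) (x z : E (n + 2)) : eta x (c • z) = c * eta x z := by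
  rw [eta_comm, eta_smul_left, eta_comm z]

lemma eta_sub_right (x y z : E (n + 2)) : eta x (y - z) = eta x y - eta x z := by
  rw [eta_comm, eta_sub_left, eta_comm y, eta_comm z]

lemma isBilinearMap_eta : IsBilinearMap ℝ (eta : E (n + 2) → E (n + 2) → ℝ) where
  add_left := eta_add_left
  smul_left := eta_smul_left
  add_right := eta_add_right
  smul_right := eta_smul_right

def etaL : E (n + 2) →L[ℝ] E (n + 2) →L[ℝ] ℝ :=
  isBilinearMap_eta.toContinuousBilinearMap

@[simp]
lemma etaL_apply (x y : E (n + 2)) : etaL x y = eta x y := rfl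

lemma eta_eq_sum_succ (x y : E (n + 2)) :
    eta x y = ∑ i : Fin (n + 1), x i.succ * y i.succ - x 0 * y 0 := by
  rw [eta, Fin.sum_univ_succ]; ring

lemma eta_self_add_two_mul_sq (x : E (n + 2)) : eta x x + 2 * x 0 ^ 2 = ‖x‖ ^ 2 := by
  simp only [eta, EuclideanSpace.norm_sq_eq, Real.norm_eq_abs, sq_abs]; ring_nf

/-- Cauchy–Schwarz on the spatial coordinates. -/
lemma eta_self_pos_of_eta_timelike_eq_zero {t v : E (n + 2)} (ht : eta t t < 0)
    (hvt : eta v t = 0) (hv : v ≠ 0) : 0 < eta v v := by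
  have hnorm := eta_self_add_two_mul_sq v
  have hv' : 0 < ‖v‖ ^ 2 := by positivity
  rw [eta_eq_sum_succ] at ht hvt hnorm ⊢
  have cs := Finset.sum_mul_sq_le_sq_mul_sq Finset.univ (fun i : Fin (n + 1) => v i.succ)
    (fun i => t i.succ)
  have hb : 0 ≤ ∑ i : Fin (n + 1), t i.succ ^ 2 := by positivity
  simp only [← sq] at ht hnorm ⊢
  generalize ∑ i : Fin (n + 1), v i.succ * t i.succ = c at *
  generalize ∑ i : Fin (n + 1), v i.succ ^ 2 = a at *
  generalize ∑ i : Fin (n + 1), t i.succ ^ 2 = b at *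
  obtain rfl : c = v 0 * t 0 := by linarith
  by_contra! h
  nlinarith [mul_pos (hnorm ▸ hv' : 0 < a - v 0 ^ 2 + 2 * v 0 ^ 2) (sub_pos.2 (sub_neg.1 ht)),
    mul_nonneg hb (sub_nonneg.2 (sub_nonpos.1 h)),
    mul_nonneg (sub_nonneg.2 (sub_nonpos.1 h)) (sq_nonneg (t 0))]

end Algebra

section NullFrame

variable {n : ℕ}

structure IsNullPair (ξ N : E (n + 2)) : Prop where
  xi_xi : eta ξ ξ = 0
  N_N : eta N N = 0
  xi_N : eta ξ N = 1

def IsScreen (ξ N v : E (n + 2)) : Prop :=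
  eta v ξ = 0 ∧ eta v N = 0

variable {ξ N : E (n + 2)}

lemma IsScreen.smul {v : E (n + 2)} (hv : IsScreen ξ N v) (c : ℝ) : IsScreen ξ N (c • v) := by
  simp only [IsScreen, eta_smul_left, hv.1, hv.2, mul_zero, and_self]

lemma eta_sproj_of_isScreen {x : E (n + 2)} (hx : IsScreen ξ N x) (w : E (n + 2)) :
    eta (sproj ξ N w) x = eta w x := by
  rw [sproj, eta_sub_left, eta_sub_left, eta_smul_left, eta_smul_left, eta_comm ξ, eta_comm N,
    hx.1, hx.2]
  ring

namespace IsNullPair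

variable (h : IsNullPair ξ N)
include h

lemma isScreen_sproj (w : E (n + 2)) : IsScreen ξ N (sproj ξ N w) := by
  constructor <;>
  · simp only [sproj, eta_sub_left, eta_smul_left, h.xi_xi, h.N_N, h.xi_N, eta_comm N ξ]
    ring

lemma eta_self_eq_add_eta_sproj_self (w : E (n + 2)) :
    eta w w = 2 * (eta w ξ * eta w N) + eta (sproj ξ N w) (sproj ξ N w) := by
  simp only [sproj, eta_sub_left, eta_sub_right, eta_smul_left, eta_smul_right, eta_comm ξ w,
    eta_comm N w, eta_comm N ξ, h.xi_xi, h.N_N, h.xi_N]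
  ring

/-- Screen vectors are orthogonal to the timelike vector `ξ - N`, hence spacelike. -/
lemma eta_self_pos {v : E (n + 2)} (hv : IsScreen ξ N v) (hv0 : v ≠ 0) : 0 < eta v v := by
  refine eta_self_pos_of_eta_timelike_eq_zero (t := ξ - N) ?_ ?_ hv0
  · simp only [eta_sub_left, eta_sub_right, eta_comm N ξ, h.xi_xi, h.N_N, h.xi_N]
    norm_num
  · rw [eta_sub_right, hv.1, hv.2, sub_zero]

end IsNullPair

lemma linearIndependent_of_eta_dual {ι : Type*} [Fintype ι] [DecidableEq ι] {b b' : ι → E (n + 2)}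
    (h : ∀ i j, eta (b i) (b' j) = if i = j then 1 else 0) : LinearIndependent ℝ b := by
  rw [Fintype.linearIndependent_iff]
  intro g hg j
  simpa [map_sum, eta_smul_left, h] using congrArg (etaL.flip (b' j)) hg

end NullFrame

lemma IsNullPair.sproj_eq_zero {ξ N T W : E 4} (h : IsNullPair ξ N) (hT : IsScreen ξ N T)
    (hW : IsScreen ξ N W) (hTT : eta T T = 1) (hWW : eta W W = 1) (hTW : eta T W = 0) {u : E 4}
    (huT : eta u T = 0) (huW : eta u W = 0) : sproj ξ N u = 0 := by
  have hli : LinearIndependent ℝ ![ξ, N, T, W] := by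
    refine linearIndependent_of_eta_dual (b' := ![N, ξ, T, W]) fun i j => ?_
    fin_cases i <;> fin_cases j <;>
      simp [h.xi_xi, h.N_N, h.xi_N, eta_comm N ξ, hT.1, hT.2, hW.1, hW.2, hTT, hWW, hTW,
        eta_comm W T, eta_comm ξ T, eta_comm N T, eta_comm ξ W, eta_comm N W]
  have hspan : Submodule.span ℝ (Set.range ![ξ, N, T, W]) = ⊤ :=
    hli.span_eq_top_of_card_eq_finrank (by simp)
  set y := sproj ξ N u
  have hy : IsScreen ξ N y := h.isScreen_sproj u
  have hyy : eta y y = 0 := by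
    have : Submodule.span ℝ (Set.range ![ξ, N, T, W]) ≤
        LinearMap.ker ((etaL y : E (2 + 2) →L[ℝ] ℝ) : E 4 →ₗ[ℝ] ℝ) := by
      rw [Submodule.span_le]
      rintro _ ⟨i, rfl⟩
      fin_cases i <;> simp [hy.1, hy.2, y, eta_sproj_of_isScreen hT, eta_sproj_of_isScreen hW,
        huT, huW]
    exact this (hspan ▸ Submodule.mem_top)
  by_contra hy0
  exact (h.eta_self_pos hy hy0).ne' hyy

section Calculus

variable {n : ℕ} {F : Type*} [NormedAddCommGroup F] [NormedSpace ℝ F] {p : F}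

lemma DifferentiableAt.eta {f g : F → E (n + 2)} (hf : DifferentiableAt ℝ f p)
    (hg : DifferentiableAt ℝ g p) : DifferentiableAt ℝ (fun q => eta (f q) (g q)) p :=
  (etaL.hasFDerivAt_of_bilinear hf.hasFDerivAt hg.hasFDerivAt).differentiableAt

lemma fderiv_eta_apply {f g : F → E (n + 2)} (hf : DifferentiableAt ℝ f p)
    (hg : DifferentiableAt ℝ g p) (v : F) :
    fderiv ℝ (fun q => eta (f q) (g q)) p v =
      eta (fderiv ℝ f p v) (g p) + eta (f p) (fderiv ℝ g p v) := by
  rw [show (fun q => eta (f q) (g q)) = fun q => etaL (f q) (g q) from rfl,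
    etaL.fderiv_of_bilinear hf hg]
  simp [add_comm]

lemma eta_fderiv_add_eta_fderiv_eq_zero {f g : F → E (n + 2)} {c : ℝ}
    (hf : DifferentiableAt ℝ f p) (hg : DifferentiableAt ℝ g p)
    (h : ∀ᶠ q in 𝓝 p, eta (f q) (g q) = c) (v : F) :
    eta (fderiv ℝ f p v) (g p) + eta (f p) (fderiv ℝ g p v) = 0 := by
  rw [← fderiv_eta_apply hf hg, EventuallyEq.fderiv_eq (f := fun _ => c) h]
  simp

variable {ξ N w : F → E (n + 2)}

lemma DifferentiableAt.sproj (hξ : DifferentiableAt ℝ ξ p) (hN : DifferentiableAt ℝ N p)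
    (hw : DifferentiableAt ℝ w p) : DifferentiableAt ℝ (fun q => sproj (ξ q) (N q) (w q)) p :=
  (hw.sub ((hw.eta hN).smul hξ)).sub ((hw.eta hξ).smul hN)

lemma eta_fderiv_sproj_of_isScreen (hξ : DifferentiableAt ℝ ξ p) (hN : DifferentiableAt ℝ N p)
    (hw : DifferentiableAt ℝ w p) {x : E (n + 2)} (hx : IsScreen (ξ p) (N p) x) (v : F) :
    eta (fderiv ℝ (fun q => sproj (ξ q) (N q) (w q)) p v) x =
      eta (fderiv ℝ w p v) x - eta (w p) (N p) * eta (fderiv ℝ ξ p v) x -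
        eta (w p) (ξ p) * eta (fderiv ℝ N p v) x := by
  have hd : HasFDerivAt (fun q => sproj (ξ q) (N q) (w q)) _ p :=
    (hw.hasFDerivAt.sub ((hw.eta hN).hasFDerivAt.smul hξ.hasFDerivAt)).sub
      ((hw.eta hξ).hasFDerivAt.smul hN.hasFDerivAt)
  rw [hd.fderiv]
  simp only [sub_apply, add_apply, smul_apply, ContinuousLinearMap.smulRight_apply, eta_sub_left,
    eta_add_left, eta_smul_left, eta_comm (ξ p) x, eta_comm (N p) x, hx.1, hx.2]
  ring

lemma eta_AZperp_of_isScreen {ξ N Z : E (n + 2) → E (n + 2)} {p : E (n + 2)}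
    (hξ : DifferentiableAt ℝ ξ p) (hN : DifferentiableAt ℝ N p) (hZ : DifferentiableAt ℝ Z p)
    (hpar : fderiv ℝ Z p = 0) {x : E (n + 2)} (hx : IsScreen (ξ p) (N p) x) (v : E (n + 2)) :
    eta (AZperp ξ N Z p v) x = eta (fderiv ℝ (Zstar ξ N Z) p v) x := by
  change _ = eta (fderiv ℝ (fun q => sproj (ξ q) (N q) (Z q)) p v) x
  rw [eta_fderiv_sproj_of_isScreen hξ hN hZ hx, hpar]
  simp only [AZperp, Astar, AN, eta_add_left, eta_smul_left, eta_neg_left,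
    eta_sproj_of_isScreen hx, zero_apply, eta_zero_left]
  ring

end Calculus

section Normalize

variable {n : ℕ} {F : Type*} [NormedAddCommGroup F] [NormedSpace ℝ F] {p : F}

def etaNormalize (v : E (n + 2)) : E (n + 2) :=
  (√(eta v v))⁻¹ • v

lemma eta_etaNormalize_self {v : E (n + 2)} (hv : 0 < eta v v) :
    eta (etaNormalize v) (etaNormalize v) = 1 := by
  rw [etaNormalize, eta_smul_left, eta_smul_right, ← mul_assoc, ← mul_inv,
    Real.mul_self_sqrt hv.le, inv_mul_cancel₀ hv.ne']

lemma differentiableAt_etaNormalize {S : F → E (n + 2)} (hS : DifferentiableAt ℝ S p)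
    (hpos : 0 < eta (S p) (S p)) : DifferentiableAt ℝ (fun q => etaNormalize (S q)) p :=
  (((hS.eta hS).sqrt hpos.ne').inv (Real.sqrt_pos.2 hpos).ne').smul hS

lemma eta_fderiv_etaNormalize_of_eta_eq_zero {S : F → E (n + 2)} (hS : DifferentiableAt ℝ S p)
    (hpos : 0 < eta (S p) (S p)) {x : E (n + 2)} (hx : eta (S p) x = 0) (v : F) :
    eta (fderiv ℝ (fun q => etaNormalize (S q)) p v) x =
      (√(eta (S p) (S p)))⁻¹ * eta (fderiv ℝ S p v) x := by
  have hρ : DifferentiableAt ℝ (fun q => (√(eta (S q) (S q)))⁻¹) p :=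
    ((hS.eta hS).sqrt hpos.ne').inv (Real.sqrt_pos.2 hpos).ne'
  simp only [etaNormalize]
  rw [fderiv_fun_smul hρ hS]
  simp only [add_apply, smul_apply, ContinuousLinearMap.smulRight_apply, eta_add_left,
    eta_smul_left, hx, mul_zero, add_zero]

end Normalize

section ConstantAngle

variable {n : ℕ} {ξ N Z : E (n + 2) → E (n + 2)} {p : E (n + 2)}

lemma eta_AZperp_comm {v w : E (n + 2)} (hA : eta (Astar ξ N p v) w = eta v (Astar ξ N p w))
    (hAN : eta (AN ξ N p v) w = eta v (AN ξ N p w)) :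
    eta (AZperp ξ N Z p v) w = eta v (AZperp ξ N Z p w) := by
  rw [AZperp, AZperp, eta_add_left, eta_smul_left, eta_smul_left, hA, hAN, eta_add_right,
    eta_smul_right, eta_smul_right]

lemma eta_fderiv_Zstar_Zstar_eq_zero (hframe : ∀ᶠ q in 𝓝 p, IsNullPair (ξ q) (N q))
    (hξ : DifferentiableAt ℝ ξ p) (hN : DifferentiableAt ℝ N p) (hZ : DifferentiableAt ℝ Z p)
    (hpar : fderiv ℝ Z p = 0) {v : E (n + 2)}
    (hang : fderiv ℝ (fun q => eta (Z q) (ξ q) * eta (Z q) (N q)) p v = 0) :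
    eta (fderiv ℝ (Zstar ξ N Z) p v) (Zstar ξ N Z p) = 0 := by
  have hS : DifferentiableAt ℝ (Zstar ξ N Z) p := hξ.sproj hN hZ
  have hangle : DifferentiableAt ℝ (fun q => eta (Z q) (ξ q) * eta (Z q) (N q)) p :=
    (hZ.eta hξ).mul (hZ.eta hN)
  have hsplit : (fun q => eta (Zstar ξ N Z q) (Zstar ξ N Z q)) =ᶠ[𝓝 p]
      fun q => eta (Z q) (Z q) - 2 * (eta (Z q) (ξ q) * eta (Z q) (N q)) :=
    hframe.mono fun q hq => by
      dsimp only [Zstar]; rw [hq.eta_self_eq_add_eta_sproj_self (Z q)]; ring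
  have hd := DFunLike.congr_fun (hsplit.fderiv_eq (𝕜 := ℝ)) v
  rw [fderiv_eta_apply hS hS, fderiv_fun_sub (hZ.eta hZ) (hangle.const_mul 2)] at hd
  simp only [fderiv_const_mul hangle, sub_apply, smul_apply, hang, fderiv_eta_apply hZ hZ, hpar,
    zero_apply, eta_zero_left, eta_comm (Z p) 0, smul_zero, sub_zero, add_zero,
    eta_comm (Zstar ξ N Z p)] at hd
  linarith

lemma eta_AZperp_Zstar_eq_zero (hframe : ∀ᶠ q in 𝓝 p, IsNullPair (ξ q) (N q))
    (hξ : DifferentiableAt ℝ ξ p) (hN : DifferentiableAt ℝ N p) (hZ : DifferentiableAt ℝ Z p)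
    (hpar : fderiv ℝ Z p = 0) {v : E (n + 2)}
    (hang : fderiv ℝ (fun q => eta (Z q) (ξ q) * eta (Z q) (N q)) p v = 0) :
    eta (AZperp ξ N Z p v) (Zstar ξ N Z p) = 0 := by
  rw [eta_AZperp_of_isScreen (x := Zstar ξ N Z p) hξ hN hZ hpar
      (hframe.self_of_nhds.isScreen_sproj (Z p)),
    eta_fderiv_Zstar_Zstar_eq_zero hframe hξ hN hZ hpar hang]

lemma eta_fderiv_etaNormalize_Zstar (hξ : DifferentiableAt ℝ ξ p) (hN : DifferentiableAt ℝ N p)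
    (hZ : DifferentiableAt ℝ Z p) (hpar : fderiv ℝ Z p = 0)
    (hpos : 0 < eta (Zstar ξ N Z p) (Zstar ξ N Z p)) {x : E (n + 2)}
    (hx : IsScreen (ξ p) (N p) x) (hxZ : eta x (Zstar ξ N Z p) = 0) (v : E (n + 2)) :
    eta (fderiv ℝ (fun q => etaNormalize (Zstar ξ N Z q)) p v) x =
      (√(eta (Zstar ξ N Z p) (Zstar ξ N Z p)))⁻¹ * eta (AZperp ξ N Z p v) x := by
  rw [eta_fderiv_etaNormalize_of_eta_eq_zero (S := Zstar ξ N Z) (hξ.sproj hN hZ) hpos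
      (by rw [eta_comm, hxZ]),
    eta_AZperp_of_isScreen hξ hN hZ hpar hx]

end ConstantAngle

lemma sproj_fderiv_eq_zero_of_orthonormal {F : Type*} [NormedAddCommGroup F] [NormedSpace ℝ F]
    {p : F} {ξ N : E 4} {T W : F → E 4} (h : IsNullPair ξ N) (hT : IsScreen ξ N (T p))
    (hW : IsScreen ξ N (W p)) (hTd : DifferentiableAt ℝ T p) (hWd : DifferentiableAt ℝ W p)
    (hTT : ∀ᶠ q in 𝓝 p, eta (T q) (T q) = 1) (hWW : ∀ᶠ q in 𝓝 p, eta (W q) (W q) = 1)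
    (hWT : ∀ᶠ q in 𝓝 p, eta (W q) (T q) = 0) (v : F) (hv : eta (fderiv ℝ T p v) (W p) = 0) :
    sproj ξ N (fderiv ℝ T p v) = 0 ∧ sproj ξ N (fderiv ℝ W p v) = 0 := by
  have dTT := eta_fderiv_add_eta_fderiv_eq_zero hTd hTd hTT v
  have dWW := eta_fderiv_add_eta_fderiv_eq_zero hWd hWd hWW v
  have dWT := eta_fderiv_add_eta_fderiv_eq_zero hWd hTd hWT v
  rw [eta_comm (T p)] at dTT
  rw [eta_comm (W p)] at dWW dWT
  have hTW : eta (T p) (W p) = 0 := by rw [eta_comm]; exact hWT.self_of_nhds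
  refine ⟨h.sproj_eq_zero hT hW hTT.self_of_nhds hWW.self_of_nhds hTW ?_ hv,
    h.sproj_eq_zero hT hW hTT.self_of_nhds hWW.self_of_nhds hTW ?_ ?_⟩ <;> linarith

/-- A screen integrable constant angle null hypersurface of `ℝ^4_1` with
respect to a parallel field, with trace-free `A_{Z⊥}`, has flat screen distribution
(flat Minkowski ambient form). -/
theorem constant_angle_trace_free_flat_screen
    (U : Set (E 4)) (hU : IsOpen U)
    (ξ N Z W T : E 4 → E 4)
    (hξd : ∀ p ∈ U, DifferentiableAt ℝ ξ p)
    (hNd : ∀ p ∈ U, DifferentiableAt ℝ N p)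
    (hZd : ∀ p ∈ U, DifferentiableAt ℝ Z p)
    (hWd : ∀ p ∈ U, DifferentiableAt ℝ W p)
    (hξξ : ∀ p ∈ U, eta (ξ p) (ξ p) = 0)
    (hNN : ∀ p ∈ U, eta (N p) (N p) = 0)
    (hξN : ∀ p ∈ U, eta (ξ p) (N p) = 1)
    (hpar : ∀ p ∈ U, fderiv ℝ Z p = 0)
    (hAsym : ∀ p ∈ U, ∀ v w : E 4,
      eta v (ξ p) = 0 → eta v (N p) = 0 → eta w (ξ p) = 0 → eta w (N p) = 0 →
      eta (Astar ξ N p v) w = eta v (Astar ξ N p w))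
    (hANsym : ∀ p ∈ U, ∀ v w : E 4,
      eta v (ξ p) = 0 → eta v (N p) = 0 → eta w (ξ p) = 0 → eta w (N p) = 0 →
      eta (AN ξ N p v) w = eta v (AN ξ N p w))
    (hang : ∀ p ∈ U, ∀ v : E 4, eta v (ξ p) = 0 → eta v (N p) = 0 →
      fderiv ℝ (fun q => eta (Z q) (ξ q) * eta (Z q) (N q)) p v = 0)
    (hZs0 : ∀ p ∈ U, Zstar ξ N Z p ≠ 0)
    (hT : ∀ p, T p = (Real.sqrt (eta (Zstar ξ N Z p) (Zstar ξ N Z p)))⁻¹ • Zstar ξ N Z p)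
    (hWξ : ∀ p ∈ U, eta (W p) (ξ p) = 0)
    (hWN : ∀ p ∈ U, eta (W p) (N p) = 0)
    (hWW : ∀ p ∈ U, eta (W p) (W p) = 1)
    (hWZ : ∀ p ∈ U, eta (W p) (Zstar ξ N Z p) = 0)
    (htrace : ∀ p ∈ U,
      eta (AZperp ξ N Z p (T p)) (T p) + eta (AZperp ξ N Z p (W p)) (W p) = 0) :
    ∀ p ∈ U,
      sproj (ξ p) (N p) (fderiv ℝ T p (T p)) = 0 ∧
      sproj (ξ p) (N p) (fderiv ℝ W p (T p)) = 0 ∧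
      sproj (ξ p) (N p) (fderiv ℝ T p (W p)) = 0 ∧
      sproj (ξ p) (N p) (fderiv ℝ W p (W p)) = 0 := by
  have hTfun : T = fun q => etaNormalize (Zstar ξ N Z q) := funext hT
  have frame q (hq : q ∈ U) : IsNullPair (ξ q) (N q) := ⟨hξξ q hq, hNN q hq, hξN q hq⟩
  have hSpos q (hq : q ∈ U) : 0 < eta (Zstar ξ N Z q) (Zstar ξ N Z q) :=
    (frame q hq).eta_self_pos ((frame q hq).isScreen_sproj (Z q)) (hZs0 q hq)
  intro p hp
  have near : ∀ᶠ q in 𝓝 p, q ∈ U := hU.mem_nhds hp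
  have hS : DifferentiableAt ℝ (Zstar ξ N Z) p := (hξd p hp).sproj (hNd p hp) (hZd p hp)
  have hWscreen : IsScreen (ξ p) (N p) (W p) := ⟨hWξ p hp, hWN p hp⟩
  have hTscreen : IsScreen (ξ p) (N p) (T p) :=
    hT p ▸ ((frame p hp).isScreen_sproj (Z p)).smul _
  have hAT v (hv : IsScreen (ξ p) (N p) v) : eta (AZperp ξ N Z p v) (T p) = 0 := by
    rw [hT p, eta_smul_right, eta_AZperp_Zstar_eq_zero (near.mono frame) (hξd p hp) (hNd p hp)
      (hZd p hp) (hpar p hp) (hang p hp v hv.1 hv.2), mul_zero]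
  have hAWW : eta (AZperp ξ N Z p (W p)) (W p) = 0 := by
    linarith [htrace p hp, hAT _ hTscreen]
  have hATW : eta (AZperp ξ N Z p (T p)) (W p) = 0 := by
    rw [eta_AZperp_comm (hAsym p hp _ _ hTscreen.1 hTscreen.2 hWscreen.1 hWscreen.2)
      (hANsym p hp _ _ hTscreen.1 hTscreen.2 hWscreen.1 hWscreen.2), eta_comm, hAT _ hWscreen]
  have hω v : eta (fderiv ℝ T p v) (W p) =
      (√(eta (Zstar ξ N Z p) (Zstar ξ N Z p)))⁻¹ * eta (AZperp ξ N Z p v) (W p) := by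
    rw [hTfun]
    exact eta_fderiv_etaNormalize_Zstar (hξd p hp) (hNd p hp) (hZd p hp) (hpar p hp)
      (hSpos p hp) hWscreen (hWZ p hp) v
  have flat := sproj_fderiv_eq_zero_of_orthonormal (frame p hp) hTscreen hWscreen
    (hTfun ▸ differentiableAt_etaNormalize hS (hSpos p hp)) (hWd p hp)
    (near.mono fun q hq => by rw [hT q]; exact eta_etaNormalize_self (hSpos q hq))
    (near.mono hWW) (near.mono fun q hq => by rw [hT q, eta_smul_right, hWZ q hq, mul_zero])
  obtain ⟨hTT, hWT⟩ := flat (T p) (by rw [hω, hATW, mul_zero])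
  obtain ⟨hTW, hWW⟩ := flat (W p) (by rw [hω, hAWW, mul_zero])
  exact ⟨hTT, hWT, hTW, hWW⟩

end
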